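/- Let 0 < r ≤ 1 and k ≥ 0, and let s ∈ S ∖ (T ∪ W₂) be a state with u_k(s) = r. Then for every move b ∈ Γ₂(s): either dest_k(s,b) ∩ U^k_{>r} ≠ ∅, or dest_k(s,b) ⊆ U^k_r and there exists a state t ∈ dest_k(s,b) with entry time ℓ_k(t) < ℓ_k(s). -/

import Mathlib

open scoped Classical

/-- A (two-player) concurrent game structure: a finite state space `S`, a finite
set `M` of moves, move assignments `Γ₁ Γ₂ : S → Finset M`, and a probabilistic
transition function `δ`. -/
structure CGame (S : Type) (M : Type) where
  Γ₁ : S → Finset M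
  Γ₂ : S → Finset M
  δ : S → M → M → S → ℝ

namespace CGame

variable {S M : Type} [Fintype S] [DecidableEq S] [Fintype M] [DecidableEq M]

/-- Well-formedness of a concurrent game structure: move sets are nonempty and
`δ s a b` is a probability distribution over states. -/
def IsGame (G : CGame S M) : Prop :=
  (∀ s, (G.Γ₁ s).Nonempty) ∧ (∀ s, (G.Γ₂ s).Nonempty) ∧
    (∀ s a b t, 0 ≤ G.δ s a b t) ∧ (∀ s a b, (∑ t, G.δ s a b t) = 1)

/-- `x : M → ℝ` is a probability distribution supported on `A`. -/
def IsDistOn (A : Finset M) (x : M → ℝ) : Prop :=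
  (∀ a, 0 ≤ x a) ∧ (∀ a, x a ≠ 0 → a ∈ A) ∧ (∑ a, x a) = 1

/-- A selector for player 1. -/
def IsSel1 (G : CGame S M) (ξ : S → M → ℝ) : Prop := ∀ s, IsDistOn (G.Γ₁ s) (ξ s)

/-- A selector for player 2. -/
def IsSel2 (G : CGame S M) (ξ : S → M → ℝ) : Prop := ∀ s, IsDistOn (G.Γ₂ s) (ξ s)

/-- A strategy for player 1: maps a history (past states `w` and current state `s`)
to a distribution over the moves available at `s`. -/
def IsStrat1 (G : CGame S M) (σ : List S → S → M → ℝ) : Prop :=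
  ∀ w s, IsDistOn (G.Γ₁ s) (σ w s)

/-- A strategy for player 2. -/
def IsStrat2 (G : CGame S M) (σ : List S → S → M → ℝ) : Prop :=
  ∀ w s, IsDistOn (G.Γ₂ s) (σ w s)

/-- The memoryless strategy induced by a selector. -/
def ml (ξ : S → M → ℝ) : List S → S → M → ℝ := fun _ s => ξ s

/-- The pure (Dirac) distribution on a move `b`. -/
def pureDist (b : M) : M → ℝ := fun b' => if b' = b then 1 else 0

/-- The player-1 selector choosing all available moves uniformly at random. -/
noncomputable def uniformSel (G : CGame S M) : S → M → ℝ :=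
  fun s a => if a ∈ G.Γ₁ s then (1 : ℝ) / (G.Γ₁ s).card else 0

/-- Probability of reaching `T` within `n` steps, starting from history `w`
and current state `s`, under strategies `σ₁, σ₂`. -/
noncomputable def reachW (G : CGame S M) (σ₁ σ₂ : List S → S → M → ℝ) (T : Set S) :
    ℕ → List S → S → ℝ
  | 0, _, s => if s ∈ T then 1 else 0
  | n + 1, w, s =>
      if s ∈ T then 1
      else ∑ a : M, ∑ b : M, ∑ t : S,
        σ₁ w s a * σ₂ w s b * G.δ s a b t * reachW G σ₁ σ₂ T n (w ++ [s]) t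

/-- Probability of staying in `F` for `n` steps, starting from history `w`
and current state `s`, under strategies `σ₁, σ₂`. -/
noncomputable def safeW (G : CGame S M) (σ₁ σ₂ : List S → S → M → ℝ) (F : Set S) :
    ℕ → List S → S → ℝ
  | 0, _, s => if s ∈ F then 1 else 0
  | n + 1, w, s =>
      if s ∈ F then
        ∑ a : M, ∑ b : M, ∑ t : S,
          σ₁ w s a * σ₂ w s b * G.δ s a b t * safeW G σ₁ σ₂ F n (w ++ [s]) t
      else 0

/-- `Pr_s^{σ₁,σ₂}(Reach T)`: probability of eventually reaching `T` from `s`. -/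
noncomputable def prReach (G : CGame S M) (σ₁ σ₂ : List S → S → M → ℝ) (T : Set S)
    (s : S) : ℝ :=
  ⨆ n : ℕ, reachW G σ₁ σ₂ T n [] s

/-- `Pr_s^{σ₁,σ₂}(Safe F)`: probability that the play stays in `F` forever. -/
noncomputable def prSafe (G : CGame S M) (σ₁ σ₂ : List S → S → M → ℝ) (F : Set S)
    (s : S) : ℝ :=
  ⨅ n : ℕ, safeW G σ₁ σ₂ F n [] s

/-- `⟨1⟩val^{σ₁}(Reach T)(s) = inf_{σ₂} Pr_s^{σ₁,σ₂}(Reach T)`. -/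
noncomputable def valReachUnder (G : CGame S M) (σ₁ : List S → S → M → ℝ) (T : Set S)
    (s : S) : ℝ :=
  ⨅ σ₂ : {σ // IsStrat2 G σ}, prReach G σ₁ σ₂.1 T s

/-- `⟨1⟩val(Reach T)(s) = sup_{σ₁} inf_{σ₂} Pr_s^{σ₁,σ₂}(Reach T)`. -/
noncomputable def valReach (G : CGame S M) (T : Set S) (s : S) : ℝ :=
  ⨆ σ₁ : {σ // IsStrat1 G σ}, valReachUnder G σ₁.1 T s

/-- `⟨1⟩val^{σ₁}(Safe F)(s) = inf_{σ₂} Pr_s^{σ₁,σ₂}(Safe F)`. -/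
noncomputable def valSafeUnder (G : CGame S M) (σ₁ : List S → S → M → ℝ) (F : Set S)
    (s : S) : ℝ :=
  ⨅ σ₂ : {σ // IsStrat2 G σ}, prSafe G σ₁ σ₂.1 F s

/-- `⟨1⟩val(Safe F)(s) = sup_{σ₁} inf_{σ₂} Pr_s^{σ₁,σ₂}(Safe F)`. -/
noncomputable def valSafe (G : CGame S M) (F : Set S) (s : S) : ℝ :=
  ⨆ σ₁ : {σ // IsStrat1 G σ}, valSafeUnder G σ₁.1 F s

/-- `W₂ = {s | ⟨1⟩val(Reach T)(s) = 0}`. -/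
noncomputable def W2 (G : CGame S M) (T : Set S) : Set S := {s | valReach G T s = 0}

/-- `W₁ = {s | ⟨1⟩val(Safe F)(s) = 1}`. -/
noncomputable def W1 (G : CGame S M) (F : Set S) : Set S := {s | valSafe G F s = 1}

/-- A state is absorbing if for all moves the successor is the state itself. -/
def Absorbing (G : CGame S M) (s : S) : Prop := ∀ a b, G.δ s a b s = 1

/-- A player-1 strategy is proper if against every player-2 strategy, from every
state the set `T ∪ W₂` is reached with probability 1. -/
noncomputable def Proper (G : CGame S M) (T : Set S) (σ₁ : List S → S → M → ℝ) : Prop :=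
  ∀ σ₂, IsStrat2 G σ₂ → ∀ s, prReach G σ₁ σ₂ (T ∪ W2 G T) s = 1

/-- `Pre_{ξ₁,ξ₂}(v)(s)`: one-step expectation of `v` at `s` when the players use the
one-state selectors `x, y`. -/
noncomputable def preSS (G : CGame S M) (v : S → ℝ) (s : S) (x y : M → ℝ) : ℝ :=
  ∑ a : M, ∑ b : M, ∑ t : S, v t * G.δ s a b t * x a * y b

/-- `Pre_{1:ξ₁}(v)(s) = inf_{ξ₂} Pre_{ξ₁,ξ₂}(v)(s)`. -/
noncomputable def pre1Sel (G : CGame S M) (v : S → ℝ) (s : S) (x : M → ℝ) : ℝ :=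
  ⨅ y : {y : M → ℝ // IsDistOn (G.Γ₂ s) y}, preSS G v s x y.1

/-- `Pre₁(v)(s) = sup_{ξ₁} inf_{ξ₂} Pre_{ξ₁,ξ₂}(v)(s)`. -/
noncomputable def pre1 (G : CGame S M) (v : S → ℝ) (s : S) : ℝ :=
  ⨆ x : {x : M → ℝ // IsDistOn (G.Γ₁ s) x}, pre1Sel G v s x.1

/-- The value-iteration sequence: `u 0 = [T]`, `u (k+1) = Pre₁ (u k)`. -/
noncomputable def valIter (G : CGame S M) (T : Set S) : ℕ → S → ℝ
  | 0 => fun s => if s ∈ T then 1 else 0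
  | n + 1 => fun s => pre1 G (valIter G T n) s

/-- The entry time `ℓ_k(s) = min {j ≤ k | u_j(s) = u_k(s)}`. -/
noncomputable def entryTime (G : CGame S M) (T : Set S) (k : ℕ) (s : S) : ℕ :=
  sInf {j : ℕ | valIter G T j s = valIter G T k s}

/-- `dest(s,b)` under a player-1 selector `η`: possible successors of `s` when
player 1 plays `η` and player 2 plays `b`. -/
def destSet (G : CGame S M) (η : S → M → ℝ) (s : S) (b : M) : Set S :=
  {t | ∃ a, η s a ≠ 0 ∧ G.δ s a b t ≠ 0}

/-- `OptSel(v,s)`: the set of optimal one-state player-1 selectors for `v` at `s`. -/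
noncomputable def OptSel (G : CGame S M) (v : S → ℝ) (s : S) : Set (M → ℝ) :=
  {x | IsDistOn (G.Γ₁ s) x ∧ pre1Sel G v s x = pre1 G v s}

/-- `CountOpt(v,s,x)`: the set of counter-optimal player-2 moves against `x`. -/
noncomputable def countOpt (G : CGame S M) (v : S → ℝ) (s : S) (x : M → ℝ) : Finset M :=
  (G.Γ₂ s).filter fun b => preSS G v s x (pureDist b) = pre1 G v s

/-- The support of a one-state selector, as a `Finset`. -/
noncomputable def fsupp (x : M → ℝ) : Finset M := Finset.univ.filter fun a => x a ≠ 0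

/-- `OptSelCount(v,s)`: pairs `(A,B)` such that some optimal selector has support `A`
and counter-optimal action set `B`. -/
noncomputable def optSelCount (G : CGame S M) (v : S → ℝ) (s : S) :
    Set (Finset M × Finset M) :=
  {p | ∃ x ∈ OptSel G v s, fsupp x = p.1 ∧ countOpt G v s x = p.2}

/-- A selector is `k`-uniform if every probability it assigns is of the form `i/j`
with `0 ≤ i ≤ j ≤ k`. -/
def KUniform (k : ℕ) (ξ : S → M → ℝ) : Prop :=
  ∀ s a, ∃ i j : ℕ, i ≤ j ∧ j ≤ k ∧ ξ s a = (i : ℝ) / (j : ℝ)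

end CGame

/-!
Write `ℓ = ℓ_k(s)`. Since `u_0(s) = 0 < r`, we have `ℓ > 0` and
`r = u_ℓ(s) = Pre₁(u_{ℓ-1})(s)`. As `η_k(s)` is optimal for `u_{ℓ-1}`, the expectation of
`u_{ℓ-1}` over the successors of `s` under `η_k` and the pure move `b` is at least `r`.
Value iteration is monotone, so `u_{ℓ-1} ≤ u_k`. If no successor lies in `U^k_{>r}`, then
`u_{ℓ-1} ≤ r` on `dest_k(s,b)`, and an average of values `≤ r` that is `≥ r` forces
`u_{ℓ-1} = u_k = r` on all of `dest_k(s,b)`; hence every successor has entry time at most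
`ℓ - 1`.
-/

theorem eq_of_forall_le_of_le_sum_mul {ι : Type*} [Fintype ι] {p v : ι → ℝ} {r : ℝ}
    (hp0 : 0 ≤ p) (hp1 : ∑ i, p i = 1) (hle : ∀ i, p i ≠ 0 → v i ≤ r)
    (hr : r ≤ ∑ i, v i * p i) {i : ι} (hi : p i ≠ 0) : v i = r := by
  have hgap : ∀ j ∈ Finset.univ, 0 ≤ (r - v j) * p j := fun j _ => by
    by_cases hj : p j = 0
    · simp [hj]
    · exact mul_nonneg (sub_nonneg.mpr (hle j hj)) (hp0 j)
  have hsum : ∑ j, (r - v j) * p j = 0 := by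
    refine le_antisymm ?_ (Finset.sum_nonneg hgap)
    simp only [sub_mul, Finset.sum_sub_distrib, ← Finset.mul_sum, hp1]
    linarith
  have := (Finset.sum_eq_zero_iff_of_nonneg hgap).mp hsum i (Finset.mem_univ i)
  linarith [(mul_eq_zero.mp this).resolve_right hi]

namespace CGame

theorem IsGame.Γ₁_nonempty {S M : Type} [Fintype S] {G : CGame S M} (hG : G.IsGame) (s : S) :
    (G.Γ₁ s).Nonempty :=
  hG.1 s

theorem IsGame.Γ₂_nonempty {S M : Type} [Fintype S] {G : CGame S M} (hG : G.IsGame) (s : S) :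
    (G.Γ₂ s).Nonempty :=
  hG.2.1 s

theorem IsGame.δ_nonneg {S M : Type} [Fintype S] {G : CGame S M} (hG : G.IsGame) (s : S)
    (a b : M) (t : S) : 0 ≤ G.δ s a b t :=
  hG.2.2.1 s a b t

theorem IsGame.sum_δ {S M : Type} [Fintype S] {G : CGame S M} (hG : G.IsGame) (s : S)
    (a b : M) : ∑ t, G.δ s a b t = 1 :=
  hG.2.2.2 s a b

section Distributions

variable {M : Type} [Fintype M]

theorem IsDistOn.nonneg {A : Finset M} {x : M → ℝ} (hx : IsDistOn A x) : 0 ≤ x :=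
  hx.1

theorem IsDistOn.sum_eq_one {A : Finset M} {x : M → ℝ} (hx : IsDistOn A x) :
    ∑ a, x a = 1 :=
  hx.2.2

theorem isDistOn_uniform {A : Finset M} (hA : A.Nonempty) :
    IsDistOn A (fun a => if a ∈ A then (1 : ℝ) / A.card else 0) := by
  have hcard : (0 : ℝ) < A.card := by exact_mod_cast hA.card_pos
  refine ⟨fun a => ?_, fun a ha => ?_, ?_⟩
  · dsimp only
    split <;> positivity
  · by_contra h
    simp [h] at ha
  · rw [Finset.sum_ite_mem, Finset.univ_inter, Finset.sum_const, nsmul_eq_mul]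
    field_simp

theorem isDistOn_pureDist [DecidableEq M] {A : Finset M} {b : M} (hb : b ∈ A) :
    IsDistOn A (pureDist b) := by
  refine ⟨fun a => ?_, fun a ha => ?_, by simp [pureDist]⟩
  · unfold pureDist
    split <;> norm_num
  · by_cases h : a = b
    · exact h ▸ hb
    · simp [pureDist, h] at ha

theorem IsDistOn.sum_sum_mul_eq_one {A B : Finset M} {x y : M → ℝ} (hx : IsDistOn A x)
    (hy : IsDistOn B y) : ∑ a, ∑ b, x a * y b = 1 := by
  rw [← Finset.sum_mul_sum, hx.sum_eq_one, hy.sum_eq_one, one_mul]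

end Distributions

variable {S M : Type} [Fintype S] [Fintype M] {G : CGame S M}

theorem nonempty_distOn_Γ₂ (hG : G.IsGame) (s : S) :
    Nonempty {y : M → ℝ // IsDistOn (G.Γ₂ s) y} :=
  ⟨⟨_, isDistOn_uniform (hG.Γ₂_nonempty s)⟩⟩

section Pre

variable {v w : S → ℝ} {s : S} {x y : M → ℝ}

theorem preSS_eq_sum_sum (v : S → ℝ) (s : S) (x y : M → ℝ) :
    preSS G v s x y = ∑ a, ∑ b, x a * y b * ∑ t, v t * G.δ s a b t := by
  unfold preSS
  refine Finset.sum_congr rfl fun a _ => Finset.sum_congr rfl fun b _ => ?_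
  rw [Finset.mul_sum]
  exact Finset.sum_congr rfl fun t _ => by ring

theorem preSS_nonneg (hG : G.IsGame) (hv : 0 ≤ v) (hx : 0 ≤ x) (hy : 0 ≤ y) :
    0 ≤ preSS G v s x y :=
  Finset.sum_nonneg fun a _ => Finset.sum_nonneg fun b _ => Finset.sum_nonneg fun t _ =>
    mul_nonneg (mul_nonneg (mul_nonneg (hv t) (hG.δ_nonneg s a b t)) (hx a)) (hy b)

theorem preSS_mono (hG : G.IsGame) (hvw : v ≤ w) (hx : 0 ≤ x) (hy : 0 ≤ y) :
    preSS G v s x y ≤ preSS G w s x y :=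
  Finset.sum_le_sum fun a _ => Finset.sum_le_sum fun b _ => Finset.sum_le_sum fun t _ =>
    mul_le_mul_of_nonneg_right (mul_le_mul_of_nonneg_right
      (mul_le_mul_of_nonneg_right (hvw t) (hG.δ_nonneg s a b t)) (hx a)) (hy b)

theorem preSS_le_one (hG : G.IsGame) (hv : v ≤ 1) (hx : IsDistOn (G.Γ₁ s) x)
    (hy : IsDistOn (G.Γ₂ s) y) : preSS G v s x y ≤ 1 := by
  have hexp : ∀ a b, ∑ t, v t * G.δ s a b t ≤ 1 := fun a b =>
    calc ∑ t, v t * G.δ s a b t ≤ ∑ t, G.δ s a b t :=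
          Finset.sum_le_sum fun t _ => mul_le_of_le_one_left (hG.δ_nonneg s a b t) (hv t)
      _ = 1 := hG.sum_δ s a b
  calc preSS G v s x y ≤ ∑ a, ∑ b, x a * y b := by
        rw [preSS_eq_sum_sum]
        exact Finset.sum_le_sum fun a _ => Finset.sum_le_sum fun b _ =>
          mul_le_of_le_one_right (mul_nonneg (hx.nonneg a) (hy.nonneg b)) (hexp a b)
    _ = 1 := hx.sum_sum_mul_eq_one hy

theorem le_preSS_of_absorbing (hG : G.IsGame) (hv : 0 ≤ v) (habs : Absorbing G s)
    (hx : IsDistOn (G.Γ₁ s) x) (hy : IsDistOn (G.Γ₂ s) y) : v s ≤ preSS G v s x y := by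
  have hexp : ∀ a b, v s ≤ ∑ t, v t * G.δ s a b t := fun a b => by
    simpa [habs a b] using Finset.single_le_sum (f := fun t => v t * G.δ s a b t)
      (fun t _ => mul_nonneg (hv t) (hG.δ_nonneg s a b t)) (Finset.mem_univ s)
  calc v s = ∑ a, ∑ b, x a * y b * v s := by
        simp only [← Finset.sum_mul, hx.sum_sum_mul_eq_one hy, one_mul]
    _ ≤ preSS G v s x y := by
        rw [preSS_eq_sum_sum]
        exact Finset.sum_le_sum fun a _ => Finset.sum_le_sum fun b _ =>
          mul_le_mul_of_nonneg_left (hexp a b) (mul_nonneg (hx.nonneg a) (hy.nonneg b))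

theorem bddBelow_range_preSS (hG : G.IsGame) (hv : 0 ≤ v) (hx : 0 ≤ x) :
    BddBelow (Set.range fun y : {y : M → ℝ // IsDistOn (G.Γ₂ s) y} => preSS G v s x y.1) :=
  ⟨0, by rintro _ ⟨y, rfl⟩; exact preSS_nonneg hG hv hx y.2.nonneg⟩

theorem pre1Sel_le_preSS (hG : G.IsGame) (hv : 0 ≤ v) (hx : 0 ≤ x)
    (hy : IsDistOn (G.Γ₂ s) y) : pre1Sel G v s x ≤ preSS G v s x y :=
  ciInf_le (bddBelow_range_preSS hG hv hx) ⟨y, hy⟩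

theorem pre1Sel_nonneg (hG : G.IsGame) (hv : 0 ≤ v) (hx : 0 ≤ x) : 0 ≤ pre1Sel G v s x :=
  Real.iInf_nonneg fun y => preSS_nonneg hG hv hx y.2.nonneg

theorem pre1Sel_le_one (hG : G.IsGame) (hv0 : 0 ≤ v) (hv1 : v ≤ 1)
    (hx : IsDistOn (G.Γ₁ s) x) : pre1Sel G v s x ≤ 1 :=
  (pre1Sel_le_preSS hG hv0 hx.nonneg (isDistOn_uniform (hG.Γ₂_nonempty s))).trans
    (preSS_le_one hG hv1 hx (isDistOn_uniform (hG.Γ₂_nonempty s)))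

theorem pre1Sel_mono (hG : G.IsGame) (hv : 0 ≤ v) (hvw : v ≤ w) (hx : 0 ≤ x) :
    pre1Sel G v s x ≤ pre1Sel G w s x :=
  have := nonempty_distOn_Γ₂ hG s
  le_ciInf fun y => (pre1Sel_le_preSS hG hv hx y.2).trans (preSS_mono hG hvw hx y.2.nonneg)

theorem pre1Sel_le_pre1 (hG : G.IsGame) (hv0 : 0 ≤ v) (hv1 : v ≤ 1)
    (hx : IsDistOn (G.Γ₁ s) x) : pre1Sel G v s x ≤ pre1 G v s :=
  le_ciSup (f := fun x : {x : M → ℝ // IsDistOn (G.Γ₁ s) x} => pre1Sel G v s x.1)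
    ⟨1, by rintro _ ⟨x', rfl⟩; exact pre1Sel_le_one hG hv0 hv1 x'.2⟩ ⟨x, hx⟩

theorem pre1_nonneg (hG : G.IsGame) (hv : 0 ≤ v) : 0 ≤ pre1 G v s :=
  Real.iSup_nonneg fun x => pre1Sel_nonneg hG hv x.2.nonneg

theorem pre1_le_one (hG : G.IsGame) (hv0 : 0 ≤ v) (hv1 : v ≤ 1) : pre1 G v s ≤ 1 :=
  Real.iSup_le (fun x => pre1Sel_le_one hG hv0 hv1 x.2) zero_le_one

theorem pre1_mono (hG : G.IsGame) (hv : 0 ≤ v) (hvw : v ≤ w) (hw : w ≤ 1) :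
    pre1 G v s ≤ pre1 G w s :=
  Real.iSup_le (fun x => (pre1Sel_mono hG hv hvw x.2.nonneg).trans
      (pre1Sel_le_pre1 hG (hv.trans hvw) hw x.2))
    (pre1_nonneg hG (hv.trans hvw))

theorem le_pre1_of_absorbing (hG : G.IsGame) (hv0 : 0 ≤ v) (hv1 : v ≤ 1)
    (habs : Absorbing G s) : v s ≤ pre1 G v s := by
  have hx := isDistOn_uniform (hG.Γ₁_nonempty s)
  have := nonempty_distOn_Γ₂ hG s
  exact (le_ciInf fun y => le_preSS_of_absorbing hG hv0 habs hx y.2).trans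
    (pre1Sel_le_pre1 hG hv0 hv1 hx)

end Pre

section ValueIteration

variable {T : Set S}

theorem valIter_nonneg (hG : G.IsGame) (n : ℕ) : 0 ≤ valIter G T n := by
  induction n with
  | zero => intro t; simp only [valIter]; split <;> norm_num
  | succ n ih => exact fun t => pre1_nonneg hG ih

theorem valIter_le_one (hG : G.IsGame) (n : ℕ) : valIter G T n ≤ 1 := by
  induction n with
  | zero => intro t; simp only [valIter]; split <;> norm_num
  | succ n ih => exact fun t => pre1_le_one hG (valIter_nonneg hG n) ih

theorem valIter_of_mem (hG : G.IsGame) (habs : ∀ s ∈ T, Absorbing G s) (n : ℕ) {s : S}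
    (hs : s ∈ T) : valIter G T n s = 1 := by
  induction n with
  | zero => simp [valIter, hs]
  | succ n ih =>
    refine le_antisymm (pre1_le_one hG (valIter_nonneg hG n) (valIter_le_one hG n)) ?_
    have := le_pre1_of_absorbing hG (valIter_nonneg (T := T) hG n) (valIter_le_one hG n)
      (habs s hs)
    rwa [ih] at this

theorem valIter_le_succ (hG : G.IsGame) (habs : ∀ s ∈ T, Absorbing G s) (n : ℕ) :
    valIter G T n ≤ valIter G T (n + 1) := by
  induction n with
  | zero =>
    intro t
    by_cases ht : t ∈ T
    · rw [valIter_of_mem hG habs 0 ht, valIter_of_mem hG habs 1 ht]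
    · simpa [valIter, ht] using valIter_nonneg hG 1 t
  | succ n ih => exact fun t => pre1_mono hG (valIter_nonneg hG n) ih (valIter_le_one hG _)

theorem valIter_monotone (hG : G.IsGame) (habs : ∀ s ∈ T, Absorbing G s) :
    Monotone (valIter G T) :=
  monotone_nat_of_le_succ (valIter_le_succ hG habs)

end ValueIteration

section EntryTime

variable {T : Set S} {k : ℕ} {s : S}

theorem entryTime_le_of_valIter_eq {j : ℕ} (h : valIter G T j s = valIter G T k s) :
    entryTime G T k s ≤ j :=
  Nat.sInf_le h

theorem entryTime_le : entryTime G T k s ≤ k :=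
  entryTime_le_of_valIter_eq rfl

theorem valIter_entryTime : valIter G T (entryTime G T k s) s = valIter G T k s :=
  Nat.sInf_mem (s := {j | valIter G T j s = valIter G T k s}) ⟨k, rfl⟩

theorem entryTime_pos (hsT : s ∉ T) (hk : valIter G T k s ≠ 0) : 0 < entryTime G T k s := by
  refine Nat.pos_of_ne_zero fun h0 => hk ?_
  rw [← valIter_entryTime, h0]
  simp [valIter, hsT]

theorem pre1_valIter_pred_entryTime (hpos : 0 < entryTime G T k s) :
    pre1 G (valIter G T (entryTime G T k s - 1)) s = valIter G T k s := by
  rw [← valIter_entryTime (k := k)]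
  conv_rhs => rw [← Nat.sub_add_cancel hpos]
  rfl

end EntryTime

section Successors

variable {η : S → M → ℝ} {s : S} {b : M}

noncomputable def succDist (G : CGame S M) (η : S → M → ℝ) (s : S) (b : M) (t : S) : ℝ :=
  ∑ a, η s a * G.δ s a b t

theorem succDist_nonneg (hG : G.IsGame) (hη : IsSel1 G η) : 0 ≤ succDist G η s b :=
  fun t => Finset.sum_nonneg fun a _ => mul_nonneg ((hη s).nonneg a) (hG.δ_nonneg s a b t)

theorem sum_succDist (hG : G.IsGame) (hη : IsSel1 G η) : ∑ t, succDist G η s b t = 1 := by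
  simp only [succDist]
  rw [Finset.sum_comm]
  simp only [← Finset.mul_sum, hG.sum_δ, mul_one, (hη s).sum_eq_one]

theorem succDist_ne_zero_iff (hG : G.IsGame) (hη : IsSel1 G η) {t : S} :
    succDist G η s b t ≠ 0 ↔ t ∈ destSet G η s b := by
  have hterm : ∀ a, 0 ≤ η s a * G.δ s a b t := fun a =>
    mul_nonneg ((hη s).nonneg a) (hG.δ_nonneg s a b t)
  simp only [succDist, destSet, Set.mem_ofPred_eq, ne_eq,
    Finset.sum_eq_zero_iff_of_nonneg fun a _ => hterm a, Finset.mem_univ, true_implies,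
    not_forall, mul_eq_zero, not_or]

theorem destSet_nonempty (hG : G.IsGame) (hη : IsSel1 G η) : (destSet G η s b).Nonempty := by
  obtain ⟨t, -, ht⟩ := Finset.exists_ne_zero_of_sum_ne_zero
    ((sum_succDist (s := s) (b := b) hG hη).trans_ne one_ne_zero)
  exact ⟨t, (succDist_ne_zero_iff hG hη).mp ht⟩

theorem eq_on_destSet_of_le_sum_succDist (hG : G.IsGame) (hη : IsSel1 G η) {v : S → ℝ}
    {r : ℝ} (hle : ∀ t ∈ destSet G η s b, v t ≤ r)
    (hr : r ≤ ∑ t, v t * succDist G η s b t) : ∀ t ∈ destSet G η s b, v t = r :=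
  fun _ ht => eq_of_forall_le_of_le_sum_mul (succDist_nonneg hG hη) (sum_succDist hG hη)
    (fun t' ht' => hle t' ((succDist_ne_zero_iff hG hη).mp ht'))
    hr ((succDist_ne_zero_iff hG hη).mpr ht)

theorem preSS_pureDist [DecidableEq M] (v : S → ℝ) :
    preSS G v s (η s) (pureDist b) = ∑ t, v t * succDist G η s b t := by
  simp only [preSS, pureDist, mul_ite, mul_one, mul_zero, Finset.sum_ite_irrel,
    Finset.sum_const_zero, Finset.sum_ite_eq', Finset.mem_univ, if_true]
  rw [Finset.sum_comm]
  simp only [succDist, Finset.mul_sum]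
  exact Finset.sum_congr rfl fun t _ => Finset.sum_congr rfl fun a _ => by ring

theorem pre1_le_sum_succDist [DecidableEq M] (hG : G.IsGame) (hη : IsSel1 G η) {v : S → ℝ}
    (hv : 0 ≤ v) (hopt : pre1Sel G v s (η s) = pre1 G v s) (hb : b ∈ G.Γ₂ s) :
    pre1 G v s ≤ ∑ t, v t * succDist G η s b t := by
  rw [← hopt, ← preSS_pureDist v]
  exact pre1Sel_le_preSS hG hv (hη s).nonneg (isDistOn_pureDist hb)

end Successors

end CGame

theorem value_iteration_selector_successors_general
    {S M : Type} [Fintype S] [Fintype M] [DecidableEq M]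
    (G : CGame S M) (hG : G.IsGame) (T : Set S)
    (habs : ∀ s ∈ T ∪ CGame.W2 G T, CGame.Absorbing G s)
    (k : ℕ) (r : ℝ) (hr0 : 0 < r)
    (η : S → M → ℝ) (hη : CGame.IsSel1 G η)
    (hηopt : ∀ s', 0 < CGame.entryTime G T k s' →
      CGame.pre1Sel G (CGame.valIter G T (CGame.entryTime G T k s' - 1)) s' (η s')
        = CGame.pre1 G (CGame.valIter G T (CGame.entryTime G T k s' - 1)) s')
    (s : S) (hs : s ∉ T ∪ CGame.W2 G T) (hus : CGame.valIter G T k s = r) :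
    ∀ b ∈ G.Γ₂ s,
      (∃ t ∈ CGame.destSet G η s b, r < CGame.valIter G T k t) ∨
      ((∀ t ∈ CGame.destSet G η s b, CGame.valIter G T k t = r) ∧
        ∃ t ∈ CGame.destSet G η s b,
          CGame.entryTime G T k t < CGame.entryTime G T k s) := by
  intro b hb
  have hsT : s ∉ T := fun h => hs (Or.inl h)
  set ℓ := CGame.entryTime G T k s
  have hℓ : 0 < ℓ := CGame.entryTime_pos hsT (hus ▸ hr0.ne')
  set v := CGame.valIter G T (ℓ - 1)
  have hvk : v ≤ CGame.valIter G T k :=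
    CGame.valIter_monotone hG (fun t ht => habs t (Or.inl ht))
      ((Nat.sub_le ℓ 1).trans CGame.entryTime_le)
  have hrv : r ≤ ∑ t, v t * CGame.succDist G η s b t := by
    rw [← hus, ← CGame.pre1_valIter_pred_entryTime hℓ]
    exact CGame.pre1_le_sum_succDist hG hη (CGame.valIter_nonneg hG _) (hηopt s hℓ) hb
  by_cases hhigher : ∃ t ∈ CGame.destSet G η s b, r < CGame.valIter G T k t
  · exact Or.inl hhigher
  push Not at hhigher
  have hv_eq : ∀ t ∈ CGame.destSet G η s b, v t = r :=
    CGame.eq_on_destSet_of_le_sum_succDist hG hη (fun t ht => (hvk t).trans (hhigher t ht)) hrv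
  have hu_eq : ∀ t ∈ CGame.destSet G η s b, CGame.valIter G T k t = r := fun t ht =>
    (hhigher t ht).antisymm ((hv_eq t ht).symm.le.trans (hvk t))
  obtain ⟨t, ht⟩ := CGame.destSet_nonempty (s := s) (b := b) hG hη
  refine Or.inr ⟨hu_eq, t, ht, ?_⟩
  calc CGame.entryTime G T k t ≤ ℓ - 1 :=
        CGame.entryTime_le_of_valIter_eq ((hv_eq t ht).trans (hu_eq t ht).symm)
    _ < ℓ := Nat.sub_lt hℓ one_pos

/-- **Structure of successors under the value-iteration selector `η_k`.**
Let `0 < r ≤ 1`, `k ≥ 0`, and let `s ∉ T ∪ W₂` with `u_k(s) = r`. Then for every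
player-2 move `b ∈ Γ₂(s)`: either some possible successor under `η_k` and `b`
lies in a higher value class `U^k_{>r}`, or all possible successors lie in the
value class `U^k_r` and some successor has strictly smaller entry time. -/
theorem value_iteration_selector_successors
    {S M : Type} [Fintype S] [DecidableEq S] [Fintype M] [DecidableEq M]
    (G : CGame S M) (hG : G.IsGame) (T : Set S)
    (habs : ∀ s ∈ T ∪ CGame.W2 G T, CGame.Absorbing G s)
    (k : ℕ) (r : ℝ) (hr0 : 0 < r) (hr1 : r ≤ 1)
    (η : S → M → ℝ) (hη : CGame.IsSel1 G η)
    (hηopt : ∀ s', 0 < CGame.entryTime G T k s' →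
      CGame.pre1Sel G (CGame.valIter G T (CGame.entryTime G T k s' - 1)) s' (η s')
        = CGame.pre1 G (CGame.valIter G T (CGame.entryTime G T k s' - 1)) s')
    (hηunif : ∀ s', CGame.entryTime G T k s' = 0 → η s' = CGame.uniformSel G s')
    (s : S) (hs : s ∉ T ∪ CGame.W2 G T) (hus : CGame.valIter G T k s = r) :
    ∀ b ∈ G.Γ₂ s,
      (∃ t ∈ CGame.destSet G η s b, r < CGame.valIter G T k t) ∨
      ((∀ t ∈ CGame.destSet G η s b, CGame.valIter G T k t = r) ∧
        ∃ t ∈ CGame.destSet G η s b,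
          CGame.entryTime G T k t < CGame.entryTime G T k s) :=
  value_iteration_selector_successors_general G hG T habs k r hr0 η hη hηopt s hs hus
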